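/- Let μ, σ, λ ∈ ℂ with μ/2 not a nonpositive integer, let w ∈ ℂ with w² = λ, and set a = −(σ−μ)/4 + iw, b = −(σ−μ)/4 − iw, c = μ/2. Define η₁(x) = sinh(x/2)^{(μ−1)/2}·cosh(x/2)^{−(σ−1)/2}·₂F₁(a,b;c;−sinh²(x/2)) for 0 < x < 2·arsinh(1). Then η₁''(x) + (λ − q(x))·η₁(x) = 0 on this interval, where q(x) = q*(x) − ((σ−μ)/4)². -/

import Mathlib

/-!
The coefficient ratios of `₂F₁(a,b;c;z)` tend to `1`, so the series and its termwise derivatives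
converge on the unit disc, where the recurrence `(n+1)(c+n) uₙ₊₁ = (a+n)(b+n) uₙ` of its
coefficients becomes the hypergeometric equation `z(1-z)F'' + (c-(a+b+1)z)F' - abF = 0`.
For `0 < x < 2 arsinh 1` the argument `z = -sinh²(x/2)` lies in the unit disc.

Write `η₁ = W · F(z)` with `W = sinh(x/2)^α cosh(x/2)^β`, `α = (μ-1)/2`, `β = -(σ-1)/2`, and let
`L = W'/W`. Then `η₁'' = W((L² + L')F - (2L sinh cosh + (cosh² + sinh²)/2)F' + sinh² cosh² F'')`
(`sinh`, `cosh` at `x/2`; `F`, `F'`, `F''` at `z`). Using `cosh² = 1 + sinh²`, the Riccati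
expression `L² + L'` is exactly `q*`, and the `F'`- and `F''`-terms are the negatives of those of
the hypergeometric equation because `c = α + 1/2` and `a + b = α + β`. What is left,
`(λ + ((σ-μ)/4)² - ab)F`, vanishes because `ab = ((σ-μ)/4)² + w²`.
-/

noncomputable section

/-- The Gauss hypergeometric series `₂F₁(a,b;c;z) = Σ_k (a)_k (b)_k / (k! (c)_k) z^k`. -/
def hyp (a b c z : ℂ) : ℂ :=
  ∑' k : ℕ, (ascPochhammer ℂ k).eval a * (ascPochhammer ℂ k).eval b /
      ((k.factorial : ℂ) * (ascPochhammer ℂ k).eval c) * z ^ k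

/-- `q*(x) = ((μ−1)(μ−3)/16)tanh(x/2)⁻² − (μ(σ−2)+1)/8 + ((σ+1)(σ−1)/16)tanh(x/2)²`. -/
def qstar (σ μ : ℂ) (x : ℝ) : ℂ :=
  ((μ - 1) * (μ - 3) / 16) * (((Real.tanh (x / 2) : ℝ) : ℂ) ^ 2)⁻¹ - (μ * (σ - 2) + 1) / 8 +
    ((σ + 1) * (σ - 1) / 16) * ((Real.tanh (x / 2) : ℝ) : ℂ) ^ 2

/-- `η₁(x) = sinh(x/2)^{(μ−1)/2} cosh(x/2)^{−(σ−1)/2} ₂F₁(a,b;c;−sinh²(x/2))`. -/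
def eta1 (a b c μ σ : ℂ) (x : ℝ) : ℂ :=
  ((Real.sinh (x / 2) : ℝ) : ℂ) ^ ((μ - 1) / 2) *
    ((Real.cosh (x / 2) : ℝ) : ℂ) ^ (-((σ - 1) / 2)) *
    hyp a b c (-((Real.sinh (x / 2) ^ 2 : ℝ) : ℂ))

open Filter Topology

namespace PowSeries

def sum (v : ℕ → ℂ) (z : ℂ) : ℂ := ∑' n, v n * z ^ n

def derivCoeff (v : ℕ → ℂ) (n : ℕ) : ℂ := (n + 1) * v (n + 1)

def AbsSummableOnUnitBall (v : ℕ → ℂ) : Prop :=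
  ∀ r : ℝ, 0 ≤ r → r < 1 → Summable fun n => ‖v n‖ * r ^ n

variable {v : ℕ → ℂ}

theorem absSummableOnUnitBall_of_tendsto_ratio {ρ : ℕ → ℂ}
    (hv : ∀ n, v (n + 1) = ρ n * v n) (hρ : Tendsto ρ atTop (𝓝 1)) : AbsSummableOnUnitBall v := by
  intro r hr0 hr1
  refine summable_of_ratio_norm_eventually_le (r := (1 + r) / 2) (by linarith) ?_
  have hlim : Tendsto (fun n => ‖ρ n‖ * r) atTop (𝓝 r) := by
    simpa using (hρ.norm.mul_const r)
  filter_upwards [hlim.eventually_le_const (show r < (1 + r) / 2 by linarith)] with n hn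
  rw [Real.norm_of_nonneg (by positivity), Real.norm_of_nonneg (by positivity), hv, norm_mul,
    pow_succ]
  calc ‖ρ n‖ * ‖v n‖ * (r ^ n * r) = ‖ρ n‖ * r * (‖v n‖ * r ^ n) := by ring
    _ ≤ (1 + r) / 2 * (‖v n‖ * r ^ n) := by gcongr

theorem norm_derivCoeff (n : ℕ) : ‖derivCoeff v n‖ = (n + 1) * ‖v (n + 1)‖ := by
  rw [derivCoeff, norm_mul, ← Nat.cast_add_one, Complex.norm_natCast, Nat.cast_add_one]

theorem AbsSummableOnUnitBall.derivCoeff (hv : AbsSummableOnUnitBall v) :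
    AbsSummableOnUnitBall (derivCoeff v) := by
  intro r hr0 hr1
  obtain ⟨ρ, hrρ, hρ1⟩ := exists_between hr1
  have hρ0 : 0 < ρ := hr0.trans_lt hrρ
  have hsum : Summable fun n => ‖v (n + 1)‖ * ρ ^ (n + 1) :=
    (summable_nat_add_iff 1).2 (hv ρ hρ0.le hρ1)
  have hq : r / ρ < 1 := (div_lt_one hρ0).2 hrρ
  have hlim : Tendsto (fun n : ℕ => ((n : ℝ) + 1) * (r / ρ) ^ n) atTop (𝓝 0) := by
    simpa [add_mul] using (tendsto_self_mul_const_pow_of_lt_one (by positivity) hq).add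
      (tendsto_pow_atTop_nhds_zero_of_lt_one (by positivity) hq)
  refine Summable.of_norm_bounded_eventually_nat (hsum.mul_left ρ⁻¹) ?_
  filter_upwards [hlim.eventually_le_const one_pos] with n hn
  have hpow : ((n : ℝ) + 1) * r ^ n ≤ ρ ^ n := by
    rwa [div_pow, mul_div_assoc', div_le_one (by positivity)] at hn
  rw [Real.norm_of_nonneg (by positivity), norm_derivCoeff]
  calc (n + 1) * ‖v (n + 1)‖ * r ^ n = ‖v (n + 1)‖ * ((n + 1) * r ^ n) := by ring
    _ ≤ ‖v (n + 1)‖ * ρ ^ n := by gcongr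
    _ = ρ⁻¹ * (‖v (n + 1)‖ * ρ ^ (n + 1)) := by field_simp; ring

theorem AbsSummableOnUnitBall.hasSum (hv : AbsSummableOnUnitBall v) {z : ℂ} (hz : ‖z‖ < 1) :
    HasSum (fun n => v n * z ^ n) (sum v z) :=
  (Summable.of_norm (by simpa [norm_mul, norm_pow] using hv ‖z‖ (norm_nonneg z) hz)).hasSum

theorem hasDerivAt_sum (hv : AbsSummableOnUnitBall v) {z : ℂ} (hz : ‖z‖ < 1) :
    HasDerivAt (sum v) (sum (derivCoeff v) z) z := by
  obtain ⟨r, hzr, hr1⟩ := exists_between hz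
  have hr0 : 0 < r := (norm_nonneg z).trans_lt hzr
  have hbound : Summable fun n : ℕ => ‖v n‖ * (n * r ^ (n - 1)) := by
    rw [← summable_nat_add_iff 1]
    refine (hv.derivCoeff r hr0.le hr1).congr fun n => ?_
    rw [norm_derivCoeff]
    push_cast
    ring
  have hderiv : HasDerivAt (sum v) (∑' n, v n * (n * z ^ (n - 1))) z := by
    refine hasDerivAt_tsum_of_isPreconnected hbound Metric.isOpen_ball
      (convex_ball 0 r).isPreconnected (fun n y _ => (hasDerivAt_pow n y).const_mul (v n))
      (fun n y hy => ?_) (Metric.mem_ball_self hr0) ?_ (mem_ball_zero_iff.2 hzr)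
    · rw [norm_mul, norm_mul, norm_pow, Complex.norm_natCast]
      gcongr
      exact (mem_ball_zero_iff.1 hy).le
    · exact (hv.hasSum (z := 0) (by simp)).summable
  have hshift : HasSum (fun n : ℕ => v n * (n * z ^ (n - 1))) (sum (derivCoeff v) z) := by
    rw [← hasSum_nat_add_iff' 1]
    simpa [derivCoeff, mul_left_comm, mul_comm, mul_assoc] using hv.derivCoeff.hasSum hz
  rwa [hshift.tsum_eq] at hderiv

theorem hasSum_shift_mul_pow {f g : ℕ → ℂ} {z S : ℂ} (hf : HasSum (fun n => f n * z ^ n) S)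
    (hg0 : g 0 = 0) (hg : ∀ n, g (n + 1) = f n) : HasSum (fun n => g n * z ^ n) (z * S) := by
  rw [← hasSum_nat_add_iff' 1]
  simpa [hg, hg0, pow_succ, mul_comm, mul_left_comm] using hf.mul_left z

theorem hypergeometric_ode_of_recurrence (hv : AbsSummableOnUnitBall v) {a b c : ℂ}
    (hrec : ∀ n : ℕ, (n + 1) * (c + n) * v (n + 1) = (a + n) * (b + n) * v n) {z : ℂ}
    (hz : ‖z‖ < 1) :
    z * (1 - z) * sum (derivCoeff (derivCoeff v)) z
      + (c - (a + b + 1) * z) * sum (derivCoeff v) z - a * b * sum v z = 0 := by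
  have h0 := hv.hasSum hz
  have h1 := hv.derivCoeff.hasSum hz
  have h2 := hv.derivCoeff.derivCoeff.hasSum hz
  have hz1 := hasSum_shift_mul_pow (g := fun n => n * v n) h1 (by simp) fun n => by
    simp [derivCoeff]
  have hz2 := hasSum_shift_mul_pow (g := fun n => n * derivCoeff v n) h2 (by simp)
    fun n => by simp [derivCoeff]
  have hzz2 := hasSum_shift_mul_pow (g := fun n => (n - 1) * n * v n) hz2 (by simp) fun n => by
    simp [derivCoeff]; ring
  have hzero := ((hz2.sub hzz2).add ((h1.mul_left c).sub (hz1.mul_left (a + b + 1)))).sub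
    (h0.mul_left (a * b))
  have hterms : ∀ n : ℕ, n * derivCoeff v n * z ^ n - (n - 1) * n * v n * z ^ n
      + (c * (derivCoeff v n * z ^ n) - (a + b + 1) * (n * v n * z ^ n))
      - a * b * (v n * z ^ n) = 0 := fun n => by
    simp only [derivCoeff]
    linear_combination z ^ n * hrec n
  simp only [hterms] at hzero
  linear_combination hzero.unique hasSum_zero

end PowSeries

section Hypergeometric

open PowSeries

variable {a b c : ℂ}

-- Chosen so that `hyp a b c` is definitionally `PowSeries.sum (hypCoeff a b c)`.
def hypCoeff (a b c : ℂ) (n : ℕ) : ℂ :=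
  (ascPochhammer ℂ n).eval a * (ascPochhammer ℂ n).eval b /
    ((n.factorial : ℂ) * (ascPochhammer ℂ n).eval c)

theorem add_natCast_ne_zero_of_ne_neg_natCast (hc : ∀ k : ℕ, c ≠ -k) (n : ℕ) :
    c + n ≠ 0 :=
  fun h => hc n (eq_neg_of_add_eq_zero_left h)

theorem hypCoeff_recurrence (hc : ∀ k : ℕ, c ≠ -k) (n : ℕ) :
    (n + 1) * (c + n) * hypCoeff a b c (n + 1) = (a + n) * (b + n) * hypCoeff a b c n := by
  have hpoch : (ascPochhammer ℂ n).eval c ≠ 0 := by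
    rw [Ne, ascPochhammer_eval_eq_zero_iff]
    rintro ⟨k, -, hk⟩
    exact hc k (by linear_combination hk)
  have hcn := add_natCast_ne_zero_of_ne_neg_natCast hc n
  unfold hypCoeff
  rw [ascPochhammer_succ_eval, ascPochhammer_succ_eval, ascPochhammer_succ_eval,
    Nat.factorial_succ]
  push_cast
  field_simp

theorem absSummableOnUnitBall_hypCoeff (hc : ∀ k : ℕ, c ≠ -k) :
    AbsSummableOnUnitBall (hypCoeff a b c) := by
  refine absSummableOnUnitBall_of_tendsto_ratio
    (ρ := fun n : ℕ => (a + n) / (1 + n) * ((b + n) / (c + n))) (fun n => ?_) ?_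
  · have hcn := add_natCast_ne_zero_of_ne_neg_natCast hc n
    have hn : 1 + (n : ℂ) ≠ 0 := by rw [add_comm]; exact Nat.cast_add_one_ne_zero n
    rw [← mul_right_inj' (mul_ne_zero (Nat.cast_add_one_ne_zero n) hcn), hypCoeff_recurrence hc]
    field_simp
    ring
  · simpa using (tendsto_add_mul_div_add_mul_atTop_nhds a 1 1 one_ne_zero).mul
      (tendsto_add_mul_div_add_mul_atTop_nhds b c 1 one_ne_zero)

theorem hyp_ode (hc : ∀ k : ℕ, c ≠ -k) {z : ℂ} (hz : ‖z‖ < 1) :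
    z * (1 - z) * PowSeries.sum (derivCoeff (derivCoeff (hypCoeff a b c))) z
      + (c - (a + b + 1) * z) * PowSeries.sum (derivCoeff (hypCoeff a b c)) z
      - a * b * hyp a b c z = 0 :=
  hypergeometric_ode_of_recurrence (absSummableOnUnitBall_hypCoeff hc) (hypCoeff_recurrence hc) hz

end Hypergeometric

section ChangeOfVariables

open Complex (slitPlane)

def sinhHalf (x : ℝ) : ℂ := (Real.sinh (x / 2) : ℂ)

def coshHalf (x : ℝ) : ℂ := (Real.cosh (x / 2) : ℂ)

theorem hasDerivAt_sinhHalf (x : ℝ) : HasDerivAt sinhHalf (coshHalf x / 2) x := by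
  have h := ((Real.hasDerivAt_sinh (x / 2)).comp x ((hasDerivAt_id x).div_const 2)).ofReal_comp
  refine h.congr_deriv ?_
  rw [coshHalf]
  push_cast
  ring

theorem hasDerivAt_coshHalf (x : ℝ) : HasDerivAt coshHalf (sinhHalf x / 2) x := by
  have h := ((Real.hasDerivAt_cosh (x / 2)).comp x ((hasDerivAt_id x).div_const 2)).ofReal_comp
  refine h.congr_deriv ?_
  rw [sinhHalf]
  push_cast
  ring

theorem coshHalf_sq (x : ℝ) : coshHalf x ^ 2 = 1 + sinhHalf x ^ 2 := by
  simp only [coshHalf, sinhHalf]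
  exact_mod_cast (Real.cosh_sq (x / 2)).trans (add_comm _ _)

theorem sinhHalf_mem_slitPlane {x : ℝ} (hx : 0 < x) : sinhHalf x ∈ slitPlane :=
  Complex.ofReal_mem_slitPlane.2 (Real.sinh_pos_iff.2 (half_pos hx))

theorem coshHalf_mem_slitPlane (x : ℝ) : coshHalf x ∈ slitPlane :=
  Complex.ofReal_mem_slitPlane.2 (Real.cosh_pos _)

theorem HasDerivAt.cpow_const_of_real {g : ℝ → ℂ} {g' : ℂ} {x : ℝ} (hg : HasDerivAt g g' x)
    (α : ℂ) (h0 : g x ∈ slitPlane) :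
    HasDerivAt (fun t => g t ^ α) (g x ^ α * (α * g' / g x)) x := by
  refine ((Complex.hasStrictDerivAt_cpow_const h0).hasDerivAt.comp x hg).congr_deriv ?_
  rw [Complex.cpow_sub _ _ (Complex.slitPlane_ne_zero h0), Complex.cpow_one]
  ring

def weight (α β : ℂ) (x : ℝ) : ℂ := sinhHalf x ^ α * coshHalf x ^ β

def weightLogDeriv (α β : ℂ) (x : ℝ) : ℂ :=
  α * coshHalf x / (2 * sinhHalf x) + β * sinhHalf x / (2 * coshHalf x)

variable {α β : ℂ} {x : ℝ}

theorem hasDerivAt_weight (hx : 0 < x) :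
    HasDerivAt (weight α β) (weight α β x * weightLogDeriv α β x) x := by
  have hS := (hasDerivAt_sinhHalf x).cpow_const_of_real α (sinhHalf_mem_slitPlane hx)
  have hC := (hasDerivAt_coshHalf x).cpow_const_of_real β (coshHalf_mem_slitPlane x)
  refine (hS.mul hC).congr_deriv ?_
  simp only [weight, weightLogDeriv]
  ring

theorem hasDerivAt_weightLogDeriv (hx : 0 < x) :
    HasDerivAt (weightLogDeriv α β)
      (-α / (4 * sinhHalf x ^ 2) + β / (4 * coshHalf x ^ 2)) x := by
  have hS := hasDerivAt_sinhHalf x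
  have hC := hasDerivAt_coshHalf x
  have hS0 := Complex.slitPlane_ne_zero (sinhHalf_mem_slitPlane hx)
  have hC0 := Complex.slitPlane_ne_zero (coshHalf_mem_slitPlane x)
  refine (((hC.const_mul α).div (hS.const_mul 2) (by simpa using hS0)).add
    ((hS.const_mul β).div (hC.const_mul 2) (by simpa using hC0))).congr_deriv ?_
  field_simp
  linear_combination (4 * β * sinhHalf x ^ 2 - 4 * α * coshHalf x ^ 2) * coshHalf_sq x

theorem hasDerivAt_weight_mul {u : ℝ → ℂ} {u' : ℂ} (hx : 0 < x) (hu : HasDerivAt u u' x) :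
    HasDerivAt (fun t => weight α β t * u t)
      (weight α β x * (weightLogDeriv α β x * u x + u')) x :=
  ((hasDerivAt_weight hx).mul hu).congr_deriv (by ring)

def negSinhHalfSq (x : ℝ) : ℂ := -((Real.sinh (x / 2) ^ 2 : ℝ) : ℂ)

theorem negSinhHalfSq_eq (x : ℝ) : negSinhHalfSq x = -sinhHalf x ^ 2 := by
  rw [negSinhHalfSq, sinhHalf]
  push_cast
  ring

theorem hasDerivAt_negSinhHalfSq (x : ℝ) :
    HasDerivAt negSinhHalfSq (-(sinhHalf x * coshHalf x)) x := by
  rw [show negSinhHalfSq = fun t => -sinhHalf t ^ 2 from funext negSinhHalfSq_eq]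
  exact ((hasDerivAt_sinhHalf x).pow 2).neg.congr_deriv (by push_cast; ring)

theorem norm_negSinhHalfSq_lt_one (hx0 : 0 < x) (hx1 : x < 2 * Real.arsinh 1) :
    ‖negSinhHalfSq x‖ < 1 := by
  have hpos : 0 < Real.sinh (x / 2) := Real.sinh_pos_iff.2 (half_pos hx0)
  have hlt : Real.sinh (x / 2) < 1 := by
    simpa using Real.sinh_lt_sinh.2 (show x / 2 < Real.arsinh 1 by linarith)
  rw [negSinhHalfSq, norm_neg, Complex.norm_real, Real.norm_of_nonneg (by positivity)]
  nlinarith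

theorem deriv_deriv_weight_mul_comp_negSinhHalfSq {F F₁ F₂ : ℂ → ℂ}
    (hF : ∀ z, ‖z‖ < 1 → HasDerivAt F (F₁ z) z)
    (hF₁ : ∀ z, ‖z‖ < 1 → HasDerivAt F₁ (F₂ z) z)
    (hx0 : 0 < x) (hx1 : x < 2 * Real.arsinh 1) :
    deriv (deriv fun t => weight α β t * F (negSinhHalfSq t)) x =
      weight α β x *
        ((weightLogDeriv α β x ^ 2 + (-α / (4 * sinhHalf x ^ 2) + β / (4 * coshHalf x ^ 2)))
            * F (negSinhHalfSq x)
          - (2 * (weightLogDeriv α β x * (sinhHalf x * coshHalf x))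
              + (coshHalf x ^ 2 + sinhHalf x ^ 2) / 2) * F₁ (negSinhHalfSq x)
          + sinhHalf x ^ 2 * coshHalf x ^ 2 * F₂ (negSinhHalfSq x)) := by
  have hfirst : ∀ t ∈ Set.Ioo 0 (2 * Real.arsinh 1),
      HasDerivAt (fun t => weight α β t * F (negSinhHalfSq t))
        (weight α β t * (weightLogDeriv α β t * F (negSinhHalfSq t)
          + F₁ (negSinhHalfSq t) * -(sinhHalf t * coshHalf t))) t := fun t ht =>
    hasDerivAt_weight_mul ht.1
      ((hF _ (norm_negSinhHalfSq_lt_one ht.1 ht.2)).comp t (hasDerivAt_negSinhHalfSq t))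
  have hderiv : deriv (fun t => weight α β t * F (negSinhHalfSq t)) =ᶠ[𝓝 x]
      fun t => weight α β t * (weightLogDeriv α β t * F (negSinhHalfSq t)
        + F₁ (negSinhHalfSq t) * -(sinhHalf t * coshHalf t)) := by
    filter_upwards [Ioo_mem_nhds hx0 hx1] with t ht using (hfirst t ht).deriv
  have hz := norm_negSinhHalfSq_lt_one hx0 hx1
  have hsecond := hasDerivAt_weight_mul (α := α) (β := β) hx0
    (((hasDerivAt_weightLogDeriv (α := α) (β := β) hx0).mul
      ((hF _ hz).comp x (hasDerivAt_negSinhHalfSq x))).add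
    (((hF₁ _ hz).comp x (hasDerivAt_negSinhHalfSq x)).mul
      ((hasDerivAt_sinhHalf x).mul (hasDerivAt_coshHalf x)).neg))
  rw [hderiv.deriv_eq]
  refine hsecond.deriv.trans ?_
  simp only [Function.comp_apply, Pi.add_apply, Pi.neg_apply, Pi.mul_apply]
  ring

theorem weightLogDeriv_sq_add_deriv_eq_qstar (hx : 0 < x) (σ μ : ℂ) :
    weightLogDeriv ((μ - 1) / 2) (-((σ - 1) / 2)) x ^ 2
        + (-((μ - 1) / 2) / (4 * sinhHalf x ^ 2) + -((σ - 1) / 2) / (4 * coshHalf x ^ 2))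
      = qstar σ μ x := by
  have hS0 := Complex.slitPlane_ne_zero (sinhHalf_mem_slitPlane hx)
  have hC0 := Complex.slitPlane_ne_zero (coshHalf_mem_slitPlane x)
  have htanh : ((Real.tanh (x / 2) : ℝ) : ℂ) = sinhHalf x / coshHalf x := by
    rw [Real.tanh_eq_sinh_div_cosh, Complex.ofReal_div]
    rfl
  rw [qstar, htanh, weightLogDeriv]
  field_simp
  linear_combination
    1024 * ((μ - 1) * coshHalf x ^ 2 + (σ - 1) * sinhHalf x ^ 2) * coshHalf_sq x

theorem weightLogDeriv_mul_sinhHalf_mul_coshHalf (hx : 0 < x) :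
    weightLogDeriv α β x * (sinhHalf x * coshHalf x)
      = α / 2 * coshHalf x ^ 2 + β / 2 * sinhHalf x ^ 2 := by
  have hS0 := Complex.slitPlane_ne_zero (sinhHalf_mem_slitPlane hx)
  have hC0 := Complex.slitPlane_ne_zero (coshHalf_mem_slitPlane x)
  rw [weightLogDeriv]
  field_simp

end ChangeOfVariables

theorem eta1_eq (a b c μ σ : ℂ) :
    eta1 a b c μ σ =
      fun t => weight ((μ - 1) / 2) (-((σ - 1) / 2)) t * hyp a b c (negSinhHalfSq t) :=
  rfl

/-- `η₁` solves `η₁'' + (λ − q(x))η₁ = 0` on `(0, 2 arsinh 1)`, where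
`q = q* − ((σ−μ)/4)²`. -/
theorem stmt17 (μ σ lam : ℂ) (hc : ∀ k : ℕ, μ / 2 ≠ -(k : ℂ)) (w : ℂ) (hw : w ^ 2 = lam)
    (a b c : ℂ) (ha : a = -(σ - μ) / 4 + Complex.I * w)
    (hb : b = -(σ - μ) / 4 - Complex.I * w) (hc' : c = μ / 2) :
    ∀ x : ℝ, 0 < x → x < 2 * Real.arsinh 1 →
      deriv (deriv (eta1 a b c μ σ)) x +
        (lam - (qstar σ μ x - ((σ - μ) / 4) ^ 2)) * eta1 a b c μ σ x = 0 := by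
  intro x hx0 hx1
  have hc₀ : ∀ k : ℕ, c ≠ -k := hc' ▸ hc
  have hsum := absSummableOnUnitBall_hypCoeff (a := a) (b := b) hc₀
  have hode := hyp_ode (a := a) (b := b) hc₀ (norm_negSinhHalfSq_lt_one hx0 hx1)
  rw [eta1_eq, deriv_deriv_weight_mul_comp_negSinhHalfSq (F := hyp a b c)
    (fun z hz => PowSeries.hasDerivAt_sum hsum hz)
    (fun z hz => PowSeries.hasDerivAt_sum hsum.derivCoeff hz) hx0 hx1,
    weightLogDeriv_sq_add_deriv_eq_qstar hx0, weightLogDeriv_mul_sinhHalf_mul_coshHalf hx0]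
  set f₀ := hyp a b c (negSinhHalfSq x)
  set f₁ := PowSeries.sum (PowSeries.derivCoeff (hypCoeff a b c)) (negSinhHalfSq x)
  set f₂ := PowSeries.sum (PowSeries.derivCoeff (PowSeries.derivCoeff (hypCoeff a b c)))
    (negSinhHalfSq x)
  rw [negSinhHalfSq_eq] at hode
  subst ha hb hc'
  linear_combination weight ((μ - 1) / 2) (-((σ - 1) / 2)) x *
    (-hode + (sinhHalf x ^ 2 * f₂ - μ / 2 * f₁) * coshHalf_sq x + w ^ 2 * f₀ * Complex.I_sq
      - f₀ * hw)
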